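/- arXiv:2209.08536 — 5 statements merged into one kernel-verified Lean document; each statement's English description precedes it below -/
import Mathlib

section
/- Let α be a nonzero algebraic integer (a complex number that is a root of a monic polynomial with integer coefficients) such that every complex root of its minimal polynomial over ℚ has absolute value at most 1. Then α is a root of unity. -/
/-!
Put `K = ℚ⟮α⟯`. Every complex embedding of `K` sends the generator to a conjugate of `α`, so the
generator is a nonzero algebraic integer of the number field `K` lying in the closed unit disk
under every embedding. Its powers then all lie in the finite set of algebraic integers of `K` with
bounded conjugates (`NumberField.Embeddings.pow_eq_one_of_norm_le_one`), so two of them coincide.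
-/

open Polynomial IntermediateField

theorem aeval_ringHom_minpoly {K A : Type*} [Ring K] [Algebra ℚ K] [Ring A] [Algebra ℚ A]
    (φ : K →+* A) (x : K) : aeval (φ x) (minpoly ℚ x) = 0 := by
  rw [← φ.toRatAlgHom_apply, aeval_algHom_apply, minpoly.aeval, map_zero]

/-- **Kronecker's theorem.** A nonzero algebraic integer all of whose conjugates
(the complex roots of its minimal polynomial over `ℚ`) have absolute value at
most `1` is a root of unity. -/
theorem kronecker_root_of_unity (α : ℂ) (hint : IsIntegral ℤ α) (hne : α ≠ 0)
    (hconj : ∀ z : ℂ, Polynomial.aeval z (minpoly ℚ α) = 0 → ‖z‖ ≤ 1) :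
    ∃ n : ℕ, 0 < n ∧ α ^ n = 1 := by
  have : FiniteDimensional ℚ ℚ⟮α⟯ := adjoin.finiteDimensional hint.tower_top
  have : NumberField ℚ⟮α⟯ := ⟨⟩
  have hgen : algebraMap ℚ⟮α⟯ ℂ (AdjoinSimple.gen ℚ α) = α := AdjoinSimple.algebraMap_gen ℚ α
  obtain ⟨n, hn, hpow⟩ := NumberField.Embeddings.pow_eq_one_of_norm_le_one ℚ⟮α⟯ ℂ
    ((_root_.map_ne_zero _).1 (hgen ▸ hne))
    ((isIntegral_algebraMap_iff (algebraMap ℚ⟮α⟯ ℂ).injective).1 (hgen ▸ hint))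
    fun φ ↦ hconj _ (minpoly_gen ℚ α ▸ aeval_ringHom_minpoly φ _)
  exact ⟨n, hn, by rw [← hgen, ← map_pow, hpow, map_one]⟩
end

section
/- Let A be an n×m matrix with integer entries. Then A maps the closed Euclidean unit ball of ℝᵐ into the closed Euclidean unit ball of ℝⁿ (i.e. ∑ᵢ xᵢ² ≤ 1 implies ∑ⱼ (Ax)ⱼ² ≤ 1) if and only if every entry of A lies in {−1, 0, 1} and each row of A and each column of A contains at most one nonzero entry. -/
-- sum with at most one nonzero term: square of sum = sum of squares
lemma sq_sum_of_unique {m : ℕ} (f : Fin m → ℝ)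
    (h : ∀ j₁ j₂, f j₁ ≠ 0 → f j₂ ≠ 0 → j₁ = j₂) :
    (∑ j, f j) ^ 2 = ∑ j, f j ^ 2 := by
  by_cases hz : ∀ j, f j = 0
  · simp [hz]
  · push_neg at hz
    obtain ⟨j₀, hj₀⟩ := hz
    have h1 : ∑ j, f j = f j₀ :=
      Finset.sum_eq_single j₀ (fun b _ hb => by
        by_contra hfb; exact hb (h b j₀ hfb hj₀)) (by simp)
    have h2 : ∑ j, f j ^ 2 = f j₀ ^ 2 :=
      Finset.sum_eq_single j₀ (fun b _ hb => by
        by_contra hfb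
        exact hb (h b j₀ (fun h0 => hfb (by rw [h0]; ring)) hj₀)) (by simp)
    rw [h1, h2]

/-- An `n × m` integer matrix maps the closed Euclidean unit ball of `ℝᵐ` into
the closed Euclidean unit ball of `ℝⁿ` if and only if every entry lies in
`{-1, 0, 1}` and every row and every column contains at most one nonzero
entry. -/
theorem int_matrix_ball_to_ball_iff (n m : ℕ) (A : Matrix (Fin n) (Fin m) ℤ) :
    (∀ x : Fin m → ℝ, (∑ j, x j ^ 2) ≤ 1 →
      (∑ i, ((A.map fun a => (a : ℝ)).mulVec x i) ^ 2) ≤ 1) ↔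
    ((∀ i j, A i j = -1 ∨ A i j = 0 ∨ A i j = 1) ∧
     (∀ i j₁ j₂, A i j₁ ≠ 0 → A i j₂ ≠ 0 → j₁ = j₂) ∧
     (∀ j i₁ i₂, A i₁ j ≠ 0 → A i₂ j ≠ 0 → i₁ = i₂)) := by
  have mv : ∀ (x : Fin m → ℝ) (i : Fin n),
      (A.map fun a => (a : ℝ)).mulVec x i = ∑ j, (A i j : ℝ) * x j := by
    intro x i
    simp [Matrix.mulVec, dotProduct, Matrix.map_apply]
  constructor
  · intro H
    -- column sums of squares are ≤ 1
    have col : ∀ j, (∑ i, (A i j : ℝ) ^ 2) ≤ 1 := by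
      intro j
      have hx : (∑ k, (if k = j then (1:ℝ) else 0) ^ 2) ≤ 1 := by
        have he : ∀ k : Fin m, (if k = j then (1:ℝ) else 0) ^ 2 = if k = j then 1 else 0 := by
          intro k; split <;> norm_num
        simp [he]
      have := H (fun k => if k = j then (1:ℝ) else 0) hx
      simpa [mv, mul_ite] using this
    -- entries are small
    have hsq : ∀ i j, (A i j : ℝ) ^ 2 ≤ 1 := by
      intro i j
      refine le_trans ?_ (col j)
      exact Finset.single_le_sum (f := fun i => (A i j : ℝ) ^ 2)
        (fun i _ => sq_nonneg _) (Finset.mem_univ i)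
    have hent : ∀ i j, A i j = -1 ∨ A i j = 0 ∨ A i j = 1 := by
      intro i j
      have : (A i j : ℝ) ^ 2 ≤ 1 := hsq i j
      have : ((A i j ^ 2 : ℤ) : ℝ) ≤ ((1 : ℤ) : ℝ) := by push_cast; linarith
      have h2 : A i j ^ 2 ≤ 1 := by exact_mod_cast this
      have : -1 ≤ A i j ∧ A i j ≤ 1 := abs_le.mp ((sq_le_one_iff_abs_le_one _).mp h2)
      omega
    have hone : ∀ i j, A i j ≠ 0 → (A i j : ℝ) ^ 2 = 1 := by
      intro i j hij
      rcases hent i j with h | h | h <;> simp [h] at hij ⊢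
    refine ⟨hent, ?_, ?_⟩
    · -- rows
      intro i j₁ j₂ h1 h2
      by_contra hne
      set c : ℝ := (Real.sqrt 2)⁻¹ with hc
      have hc2 : c ^ 2 = 1 / 2 := by
        rw [hc, inv_pow, Real.sq_sqrt (by norm_num : (2:ℝ) ≥ 0)]
        · norm_num
      set x : Fin m → ℝ := fun k =>
        if k = j₁ then (A i j₁ : ℝ) * c else if k = j₂ then (A i j₂ : ℝ) * c else 0 with hxdef
      have hsum : ∀ (g : Fin m → ℝ), (∀ k, k ≠ j₁ → k ≠ j₂ → g k = 0) →
          ∑ k, g k = g j₁ + g j₂ := by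
        intro g hg
        rw [← Finset.sum_subset (Finset.subset_univ {j₁, j₂})
          (fun k _ hk => by
            simp only [Finset.mem_insert, Finset.mem_singleton, not_or] at hk
            exact hg k hk.1 hk.2)]
        exact Finset.sum_pair hne
    -- x j₁, x j₂ values
      have hx1 : x j₁ = (A i j₁ : ℝ) * c := by simp [hxdef]
      have hx2 : x j₂ = (A i j₂ : ℝ) * c := by simp [hxdef, hne, Ne.symm hne]
      have hxnorm : (∑ k, x k ^ 2) ≤ 1 := by
        have : ∑ k, x k ^ 2 = x j₁ ^ 2 + x j₂ ^ 2 := by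
          apply hsum
          intro k hk1 hk2
          simp [hxdef, hk1, hk2]
        rw [this, hx1, hx2, mul_pow, mul_pow, hone i j₁ h1, hone i j₂ h2, hc2]
        norm_num
      have key := H x hxnorm
      have hAxi : (A.map fun a => (a : ℝ)).mulVec x i = 2 * c := by
        rw [mv]
        have : ∑ j, (A i j : ℝ) * x j = (A i j₁ : ℝ) * x j₁ + (A i j₂ : ℝ) * x j₂ := by
          apply hsum
          intro k hk1 hk2
          simp [hxdef, hk1, hk2]
        rw [this, hx1, hx2, ← mul_assoc, ← mul_assoc]
        have e1 : (A i j₁ : ℝ) * (A i j₁ : ℝ) = 1 := by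
          have := hone i j₁ h1; nlinarith [this]
        have e2 : (A i j₂ : ℝ) * (A i j₂ : ℝ) = 1 := by
          have := hone i j₂ h2; nlinarith [this]
        rw [e1, e2]; ring
      have hge : (2:ℝ) ≤ ∑ i', ((A.map fun a => (a : ℝ)).mulVec x i') ^ 2 := by
        have hterm : ((A.map fun a => (a : ℝ)).mulVec x i) ^ 2 = 2 := by
          rw [hAxi]; nlinarith [hc2]
        have h' := Finset.single_le_sum
          (f := fun i' => ((A.map fun a => (a : ℝ)).mulVec x i') ^ 2)
          (fun i' _ => sq_nonneg _) (Finset.mem_univ i)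
        have h'' : ((A.map fun a => (a : ℝ)).mulVec x i) ^ 2 ≤
            ∑ i', ((A.map fun a => (a : ℝ)).mulVec x i') ^ 2 := h'
        linarith
      linarith
    · -- columns
      intro j i₁ i₂ h1 h2
      by_contra hne
      have hle := Finset.sum_le_sum_of_subset_of_nonneg
        (f := fun i => (A i j : ℝ) ^ 2) (Finset.subset_univ {i₁, i₂})
        (fun i _ _ => sq_nonneg _)
      rw [Finset.sum_pair hne, hone i₁ j h1, hone i₂ j h2] at hle
      have := col j
      linarith
  · rintro ⟨hent, hrow, hcol⟩ x hx
    have colsum : ∀ j, (∑ i, (A i j : ℝ) ^ 2) ≤ 1 := by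
      intro j
      by_cases hz : ∀ i, A i j = 0
      · simp [hz]
      · push_neg at hz
        obtain ⟨i₀, hi₀⟩ := hz
        have : ∑ i, (A i j : ℝ) ^ 2 = (A i₀ j : ℝ) ^ 2 := by
          apply Finset.sum_eq_single i₀ (fun b _ hb => ?_) (by simp)
          have : A b j = 0 := by
            by_contra hb0; exact hb (hcol j b i₀ hb0 hi₀)
          simp [this]
        rw [this]
        rcases hent i₀ j with h | h | h <;> simp [h]
    calc ∑ i, ((A.map fun a => (a : ℝ)).mulVec x i) ^ 2
        = ∑ i, ∑ j, ((A i j : ℝ) * x j) ^ 2 := by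
          refine Finset.sum_congr rfl (fun i _ => ?_)
          rw [mv]
          exact sq_sum_of_unique _ (fun j₁ j₂ ha hb =>
            hrow i j₁ j₂ (fun h0 => ha (by simp [h0])) (fun h0 => hb (by simp [h0])))
      _ = ∑ j, (∑ i, (A i j : ℝ) ^ 2) * x j ^ 2 := by
          rw [Finset.sum_comm]
          refine Finset.sum_congr rfl (fun j _ => ?_)
          rw [Finset.sum_mul]
          exact Finset.sum_congr rfl (fun i _ => by ring)
      _ ≤ ∑ j, x j ^ 2 := by
          refine Finset.sum_le_sum (fun j _ => ?_)
          exact mul_le_of_le_one_left (sq_nonneg _) (colsum j)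
      _ ≤ 1 := hx
end

section
/- Let p be a prime and n ≥ 1. For ζ ∈ ℂ, the number of pairs (ξ, η) of primitive p^n-th roots of unity in ℂ with ξ·η = ζ equals: φ(p^n) − p^{n−1} if ζ is a primitive p^n-th root of unity; φ(p^n) if ζ is a p^{n−1}-th root of unity (i.e. ζ^{p^{n−1}} = 1, including ζ = 1); and 0 otherwise. Here φ(p^n) = p^n − p^{n−1} is Euler's totient function. -/
/-!
Writing `N = p^(m+1)`, a pair `(ξ, η)` is determined by `ξ`, and `η = ζ / ξ`. An `N`-th root of
unity `x` is primitive iff `x^(p^m) ≠ 1`, so for primitive `ξ` and `ζ^N = 1` the quotient `ζ / ξ`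
is primitive iff `ξ^(p^m) ≠ ζ^(p^m)`. If `ζ^(p^m) = 1` this holds for every primitive `ξ`; if `ζ`
is primitive, the excluded `ξ` form the coset `ζ · μ_{p^m}`, of size `p^m`; and if `ζ^N ≠ 1`
there are no pairs at all.
-/

open scoped Classical

open Finset Polynomial

theorem isPrimitiveRoot_prime_pow_succ_iff {M : Type*} [CommMonoid M] {p m : ℕ} (hp : p.Prime)
    {x : M} (hx : x ^ p ^ (m + 1) = 1) : IsPrimitiveRoot x (p ^ (m + 1)) ↔ x ^ p ^ m ≠ 1 := by
  have := Fact.mk hp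
  refine ⟨fun h => h.pow_ne_one_of_pos_of_lt (pow_pos hp.pos m).ne' ?_, fun h => ?_⟩
  · exact Nat.pow_lt_pow_right hp.one_lt m.lt_succ_self
  · exact IsPrimitiveRoot.iff_orderOf.mpr (orderOf_eq_prime_pow h hx)

section Field

variable {K : Type*} [Field K]

theorem ncard_isPrimitiveRoot_pairs_mul_eq {N : ℕ} (hN : 0 < N) (ζ : K) :
    {q : K × K | IsPrimitiveRoot q.1 N ∧ IsPrimitiveRoot q.2 N ∧ q.1 * q.2 = ζ}.ncard =
      #{ξ ∈ primitiveRoots N K | IsPrimitiveRoot (ζ / ξ) N} := by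
  have hpairs : {q : K × K | IsPrimitiveRoot q.1 N ∧ IsPrimitiveRoot q.2 N ∧ q.1 * q.2 = ζ} =
      (fun ξ => (ξ, ζ / ξ)) '' ↑({ξ ∈ primitiveRoots N K | IsPrimitiveRoot (ζ / ξ) N}) := by
    ext ⟨ξ, η⟩
    simp only [Set.mem_ofPred_eq, Set.mem_image, coe_filter, mem_primitiveRoots hN,
      Prod.mk.injEq]
    constructor
    · rintro ⟨hξ, hη, rfl⟩
      have hquot : ξ * η / ξ = η := mul_div_cancel_left₀ η (hξ.ne_zero hN.ne')
      exact ⟨ξ, ⟨hξ, hquot.symm ▸ hη⟩, rfl, hquot⟩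
    · rintro ⟨ξ, ⟨hξ, hη⟩, rfl, rfl⟩
      exact ⟨hξ, hη, mul_div_cancel₀ ζ (hξ.ne_zero hN.ne')⟩
  rw [hpairs, Set.ncard_image_of_injective _ fun _ _ h => congrArg Prod.fst h,
    Set.ncard_coe_finset]

variable {p m : ℕ}

theorem isPrimitiveRoot_div_iff_pow_ne (hp : p.Prime) {ζ ξ : K}
    (hξ : IsPrimitiveRoot ξ (p ^ (m + 1))) (hζ : ζ ^ p ^ (m + 1) = 1) :
    IsPrimitiveRoot (ζ / ξ) (p ^ (m + 1)) ↔ ξ ^ p ^ m ≠ ζ ^ p ^ m := by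
  have hξ0 : ξ ^ p ^ m ≠ 0 := pow_ne_zero _ (hξ.ne_zero (pow_pos hp.pos _).ne')
  rw [isPrimitiveRoot_prime_pow_succ_iff hp (by rw [div_pow, hζ, hξ.pow_eq_one, div_one]),
    div_pow, Ne, div_eq_one_iff_eq hξ0, eq_comm]

theorem filter_primitiveRoots_pow_eq (hp : p.Prime) {ζ : K}
    (hζ : IsPrimitiveRoot ζ (p ^ (m + 1))) :
    {ξ ∈ primitiveRoots (p ^ (m + 1)) K | ξ ^ p ^ m = ζ ^ p ^ m} =
      (nthRootsFinset (p ^ m) (1 : K)).image (ζ * ·) := by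
  have hζ0 : ζ ≠ 0 := hζ.ne_zero (pow_pos hp.pos _).ne'
  ext ξ
  simp only [mem_filter, mem_image, mem_nthRootsFinset (pow_pos hp.pos m),
    mem_primitiveRoots (pow_pos hp.pos _)]
  constructor
  · rintro ⟨-, hξ⟩
    refine ⟨ξ / ζ, by rw [div_pow, hξ, div_self (pow_ne_zero _ hζ0)], mul_div_cancel₀ ξ hζ0⟩
  · rintro ⟨μ, hμ, rfl⟩
    have hpow : (ζ * μ) ^ p ^ m = ζ ^ p ^ m := by rw [mul_pow, hμ, mul_one]
    have hroot : (ζ * μ) ^ p ^ (m + 1) = 1 := by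
      rw [pow_succ, pow_mul, hpow, ← pow_mul, ← pow_succ, hζ.pow_eq_one]
    rw [isPrimitiveRoot_prime_pow_succ_iff hp hroot, hpow]
    exact ⟨(isPrimitiveRoot_prime_pow_succ_iff hp hζ.pow_eq_one).mp hζ, rfl⟩

theorem card_filter_primitiveRoots_pow_eq (hp : p.Prime) {ζ : K}
    (hζ : IsPrimitiveRoot ζ (p ^ (m + 1))) :
    #{ξ ∈ primitiveRoots (p ^ (m + 1)) K | ξ ^ p ^ m = ζ ^ p ^ m} = p ^ m := by
  have hζp : IsPrimitiveRoot (ζ ^ p) (p ^ m) := hζ.pow (pow_pos hp.pos _) (pow_succ' p m)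
  rw [filter_primitiveRoots_pow_eq hp hζ,
    card_image_of_injective _ (mul_right_injective₀ (hζ.ne_zero (pow_pos hp.pos _).ne')),
    hζp.card_nthRootsFinset]

theorem ncard_isPrimitiveRoot_pairs_mul_eq_of_isPrimitiveRoot (hp : p.Prime) {ω : K}
    (hω : IsPrimitiveRoot ω (p ^ (m + 1))) (ζ : K) :
    {q : K × K | IsPrimitiveRoot q.1 (p ^ (m + 1)) ∧ IsPrimitiveRoot q.2 (p ^ (m + 1)) ∧
      q.1 * q.2 = ζ}.ncard =
      if IsPrimitiveRoot ζ (p ^ (m + 1)) then Nat.totient (p ^ (m + 1)) - p ^ m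
      else if ζ ^ p ^ m = 1 then Nat.totient (p ^ (m + 1))
      else 0 := by
  have hN : 0 < p ^ (m + 1) := pow_pos hp.pos _
  rw [ncard_isPrimitiveRoot_pairs_mul_eq hN, ← hω.card_primitiveRoots]
  split_ifs with hζ hζm
  · rw [filter_congr fun ξ hξ =>
      isPrimitiveRoot_div_iff_pow_ne hp ((mem_primitiveRoots hN).mp hξ) hζ.pow_eq_one]
    have hsplit := card_filter_add_card_filter_not (s := primitiveRoots (p ^ (m + 1)) K)
      (fun ξ => ξ ^ p ^ m = ζ ^ p ^ m)
    rw [card_filter_primitiveRoots_pow_eq hp hζ] at hsplit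
    simp only [Ne]
    omega
  · have hζN : ζ ^ p ^ (m + 1) = 1 := by rw [pow_succ, pow_mul, hζm, one_pow]
    refine congrArg card (filter_true_of_mem fun ξ hξ => ?_)
    have hξ := (mem_primitiveRoots hN).mp hξ
    rw [isPrimitiveRoot_div_iff_pow_ne hp hξ hζN, hζm]
    exact (isPrimitiveRoot_prime_pow_succ_iff hp hξ.pow_eq_one).mp hξ
  · have hζN : ζ ^ p ^ (m + 1) ≠ 1 := fun h =>
      hζm (not_ne_iff.mp ((isPrimitiveRoot_prime_pow_succ_iff hp h).not.mp hζ))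
    refine card_eq_zero.mpr (filter_eq_empty_iff.mpr fun ξ hξ hdiv => hζN ?_)
    have hξ := (mem_primitiveRoots hN).mp hξ
    rw [← mul_div_cancel₀ ζ (hξ.ne_zero hN.ne'), mul_pow, hξ.pow_eq_one, hdiv.pow_eq_one,
      one_mul]

end Field

/-- For a prime `p` and `n ≥ 1`, the number of pairs `(ξ, η)` of primitive
`p^n`-th roots of unity in `ℂ` with `ξ * η = ζ` is: `φ(p^n) - p^(n-1)` if `ζ`
is a primitive `p^n`-th root of unity, `φ(p^n)` if `ζ` is a `p^(n-1)`-th root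
of unity, and `0` otherwise. -/
theorem mul_primitiveRoots_prime_pow_self (p n : ℕ) (hp : p.Prime) (hn : 1 ≤ n)
    (ζ : ℂ) :
    {q : ℂ × ℂ | IsPrimitiveRoot q.1 (p ^ n) ∧ IsPrimitiveRoot q.2 (p ^ n) ∧
      q.1 * q.2 = ζ}.ncard =
      if IsPrimitiveRoot ζ (p ^ n) then Nat.totient (p ^ n) - p ^ (n - 1)
      else if ζ ^ (p ^ (n - 1)) = 1 then Nat.totient (p ^ n)
      else 0 := by
  obtain ⟨m, rfl⟩ : ∃ m, n = m + 1 := ⟨n - 1, by omega⟩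
  rw [Nat.add_sub_cancel]
  exact ncard_isPrimitiveRoot_pairs_mul_eq_of_isPrimitiveRoot hp
    (Complex.isPrimitiveRoot_exp _ (pow_pos hp.pos _).ne') ζ
end

section
/- Let n ≥ 1 and m ≥ 1 be natural numbers and set d = gcd(m, n). The map ξ ↦ ξ^m sends the set of primitive n-th roots of unity in ℂ onto the set of primitive (n/d)-th roots of unity, and for every primitive (n/d)-th root of unity ζ, the number of primitive n-th roots of unity ξ with ξ^m = ζ equals φ(n)/φ(n/d), where φ is Euler's totient function. -/
open scoped Pointwise


/-- For `n, m ≥ 1` and `d = gcd(m, n)`, the map `ξ ↦ ξ^m` sends the primitive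
`n`-th roots of unity in `ℂ` onto the primitive `(n/d)`-th roots of unity, and
every fiber over a primitive `(n/d)`-th root of unity has exactly
`φ(n)/φ(n/d)` elements. -/
theorem pow_maps_primitiveRoots (n m : ℕ) (hn : 1 ≤ n) (hm : 1 ≤ m) :
    (Set.MapsTo (fun ξ : ℂ => ξ ^ m)
      {ξ : ℂ | IsPrimitiveRoot ξ n}
      {ζ : ℂ | IsPrimitiveRoot ζ (n / Nat.gcd m n)}) ∧
    (Set.SurjOn (fun ξ : ℂ => ξ ^ m)
      {ξ : ℂ | IsPrimitiveRoot ξ n}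
      {ζ : ℂ | IsPrimitiveRoot ζ (n / Nat.gcd m n)}) ∧
    (∀ ζ : ℂ, IsPrimitiveRoot ζ (n / Nat.gcd m n) →
      {ξ : ℂ | IsPrimitiveRoot ξ n ∧ ξ ^ m = ζ}.ncard =
        Nat.totient n / Nat.totient (n / Nat.gcd m n)) := by
  have hn0 : n ≠ 0 := by omega
  haveI : NeZero n := ⟨hn0⟩
  have hdm : Nat.gcd m n ∣ m := Nat.gcd_dvd_left m n
  have hdn : Nat.gcd m n ∣ n := Nat.gcd_dvd_right m n
  have hd0 : 0 < Nat.gcd m n := Nat.gcd_pos_of_pos_left n hm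
  set k := n / Nat.gcd m n with hkdef
  have hk0 : 0 < k := Nat.div_pos (Nat.le_of_dvd (by omega) hdn) hd0
  haveI : NeZero k := ⟨hk0.ne'⟩
  have hkn : k ∣ n := Nat.div_dvd_of_dvd hdn
  have hnkm : n ∣ k * m := by
    obtain ⟨m', hm'⟩ := hdm
    refine ⟨m', ?_⟩
    rw [hm', ← mul_assoc, hkdef, Nat.div_mul_cancel hdn]
  -- the maps-to part
  have maps : ∀ ξ : ℂ, IsPrimitiveRoot ξ n → IsPrimitiveRoot (ξ ^ m) k := by
    intro ξ hξ
    have h1 : orderOf (ξ ^ m) = k := by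
      rw [orderOf_pow' ξ (by omega : m ≠ 0), ← hξ.eq_orderOf, Nat.gcd_comm]
    exact h1 ▸ IsPrimitiveRoot.orderOf (ξ ^ m)
  obtain ⟨η, hη⟩ : ∃ η : ℂ, IsPrimitiveRoot η n := ⟨_, Complex.isPrimitiveRoot_exp n hn0⟩
  have hηm : IsPrimitiveRoot (η ^ m) k := maps η hη
  -- congruence mod k implies equal powers of η after multiplying by m
  have hηu : IsUnit η := hη.isUnit (by omega)
  have hηuval : (hηu.unit : ℂ) = η := hηu.unit_spec
  have hηup : IsPrimitiveRoot hηu.unit n := hη.isUnit_unit (by omega)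
  have key : ∀ j i : ℕ, j ≡ i [MOD k] → η ^ (j * m) = η ^ (i * m) := by
    intro j i hji
    have hmod : j * m ≡ i * m [MOD n] := (hji.mul_right' m).of_dvd hnkm
    calc η ^ (j * m) = η ^ (j * m % orderOf η) := (pow_mod_orderOf η _).symm
      _ = η ^ (i * m % orderOf η) := by rw [← hη.eq_orderOf]; exact congrArg (η ^ ·) hmod
      _ = η ^ (i * m) := pow_mod_orderOf η _
  have key2 : ∀ j i : ℕ, η ^ (j * m) = η ^ (i * m) → j ≡ i [MOD k] := by
    intro j i h
    have hu : hηu.unit ^ (j * m) = hηu.unit ^ (i * m) := by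
      ext
      simpa [hηuval] using h
    have h1 := pow_eq_pow_iff_modEq.mp hu
    rw [← hηup.eq_orderOf] at h1
    have h2 := Nat.ModEq.cancel_right_div_gcd (by omega) h1
    rwa [Nat.gcd_comm] at h2
  have surj : Set.SurjOn (fun ξ : ℂ => ξ ^ m)
      {ξ : ℂ | IsPrimitiveRoot ξ n} {ζ : ℂ | IsPrimitiveRoot ζ k} := by
    intro ζ hζ
    simp only [Set.mem_setOf_eq] at hζ
    obtain ⟨i, hik, hζi⟩ := hηm.eq_pow_of_pow_eq_one hζ.pow_eq_one
    have hic : i.Coprime k := (hηm.pow_iff_coprime hk0 i).mp (hζi ▸ hζ)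
    obtain ⟨u, hu⟩ := ZMod.unitsMap_surjective hkn (ZMod.unitOfCoprime i hic)
    have hjc : ((u : ZMod n).val).Coprime n := ZMod.val_coe_unit_coprime u
    refine ⟨η ^ (u : ZMod n).val, hη.pow_of_coprime _ hjc, ?_⟩
    have hcast : (((u : ZMod n).val : ℕ) : ZMod k) = (i : ZMod k) := by
      calc (((u : ZMod n).val : ℕ) : ZMod k)
          = ZMod.castHom hkn (ZMod k) (((u : ZMod n).val : ℕ) : ZMod n) := (map_natCast _ _).symm
        _ = ZMod.castHom hkn (ZMod k) (u : ZMod n) := by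
              rw [ZMod.natCast_rightInverse (u : ZMod n)]
        _ = ((ZMod.unitsMap hkn u : (ZMod k)ˣ) : ZMod k) := rfl
        _ = (i : ZMod k) := by rw [hu, ZMod.coe_unitOfCoprime]
    have hcong : (u : ZMod n).val ≡ i [MOD k] := (ZMod.natCast_eq_natCast_iff _ _ _).mp hcast
    show (η ^ (u : ZMod n).val) ^ m = ζ
    rw [← pow_mul, key _ i hcong, mul_comm, pow_mul]
    exact hζi
  refine ⟨fun ξ hξ => maps ξ hξ, surj, ?_⟩
  intro ζ hζ
  obtain ⟨i, hik, hζi⟩ := hηm.eq_pow_of_pow_eq_one hζ.pow_eq_one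
  have hic : i.Coprime k := (hηm.pow_iff_coprime hk0 i).mp (hζi ▸ hζ)
  set w : (ZMod k)ˣ := ZMod.unitOfCoprime i hic with hw
  set f := ZMod.unitsMap hkn with hf
  set U : Set (ZMod n)ˣ := f ⁻¹' {w} with hU
  have hgbij : Set.BijOn (fun u : (ZMod n)ˣ => η ^ (u : ZMod n).val) U
      {ξ : ℂ | IsPrimitiveRoot ξ n ∧ ξ ^ m = ζ} := by
    refine ⟨?_, ?_, ?_⟩
    · intro u hu
      have hjc : ((u : ZMod n).val).Coprime n := ZMod.val_coe_unit_coprime u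
      refine ⟨hη.pow_of_coprime _ hjc, ?_⟩
      have hfu : f u = w := hu
      have hcast : (((u : ZMod n).val : ℕ) : ZMod k) = (i : ZMod k) := by
        calc (((u : ZMod n).val : ℕ) : ZMod k)
            = ZMod.castHom hkn (ZMod k) (((u : ZMod n).val : ℕ) : ZMod n) := (map_natCast _ _).symm
          _ = ZMod.castHom hkn (ZMod k) (u : ZMod n) := by
                rw [ZMod.natCast_rightInverse (u : ZMod n)]
          _ = ((f u : (ZMod k)ˣ) : ZMod k) := rfl
          _ = (i : ZMod k) := by rw [hfu, hw, ZMod.coe_unitOfCoprime]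
      have hcong : (u : ZMod n).val ≡ i [MOD k] := (ZMod.natCast_eq_natCast_iff _ _ _).mp hcast
      show (η ^ (u : ZMod n).val) ^ m = ζ
      rw [← pow_mul, key _ i hcong, mul_comm, pow_mul]
      exact hζi
    · intro u hu v hv huv
      have h1 := hη.pow_inj (ZMod.val_lt _) (ZMod.val_lt _) huv
      exact Units.ext (ZMod.val_injective n h1)
    · intro ξ hξ
      obtain ⟨hξp, hξm⟩ := hξ
      obtain ⟨j, hjlt, hjeq⟩ := hη.eq_pow_of_pow_eq_one hξp.pow_eq_one
      have hjc : j.Coprime n := (hη.pow_iff_coprime (by omega) j).mp (hjeq ▸ hξp)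
      have hcong : j ≡ i [MOD k] := by
        apply key2
        rw [pow_mul, hjeq, hξm, ← hζi, ← pow_mul, mul_comm]
      refine ⟨ZMod.unitOfCoprime j hjc, ?_, ?_⟩
      · show f _ = w
        apply Units.ext
        show (ZMod.castHom hkn (ZMod k)) ((ZMod.unitOfCoprime j hjc : ZMod n)) = (w : ZMod k)
        rw [ZMod.coe_unitOfCoprime, map_natCast, hw, ZMod.coe_unitOfCoprime]
        exact (ZMod.natCast_eq_natCast_iff _ _ _).mpr hcong
      · show η ^ ((ZMod.unitOfCoprime j hjc : ZMod n)).val = ξ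
        rw [ZMod.coe_unitOfCoprime, ZMod.val_cast_of_lt hjlt]
        exact hjeq
  have h1 : {ξ : ℂ | IsPrimitiveRoot ξ n ∧ ξ ^ m = ζ}.ncard = U.ncard := by
    rw [← hgbij.image_eq, Set.ncard_image_of_injOn hgbij.injOn]
  obtain ⟨u₀, hu₀⟩ := ZMod.unitsMap_surjective hkn w
  have hUcoset : U = (fun x => u₀ * x) '' (f.ker : Set (ZMod n)ˣ) := by
    ext x
    simp only [hU, hf, Set.mem_preimage, Set.mem_singleton_iff, Set.mem_image,
      SetLike.mem_coe, MonoidHom.mem_ker]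
    constructor
    · intro hx
      refine ⟨u₀⁻¹ * x, ?_, by group⟩
      rw [map_mul, map_inv, hu₀, hx, inv_mul_cancel]
    · rintro ⟨y, hy, rfl⟩
      rw [map_mul, hy, hu₀, mul_one]
  have hUcard : U.ncard = Nat.card f.ker := by
    rw [hUcoset, Set.ncard_image_of_injective _ (mul_right_injective u₀)]
    exact (Nat.card_coe_set_eq _).symm
  have hq : Nat.card ((ZMod n)ˣ ⧸ f.ker) = Nat.card (ZMod k)ˣ :=
    Nat.card_congr (QuotientGroup.quotientKerEquivOfSurjective f
      (ZMod.unitsMap_surjective hkn)).toEquiv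
  have htot : Nat.card (ZMod n)ˣ = Nat.card ((ZMod n)ˣ ⧸ f.ker) * Nat.card f.ker :=
    Subgroup.card_eq_card_quotient_mul_card_subgroup f.ker
  have hnT : Nat.card (ZMod n)ˣ = n.totient := by
    rw [Nat.card_eq_fintype_card, ZMod.card_units_eq_totient]
  have hkT : Nat.card (ZMod k)ˣ = k.totient := by
    rw [Nat.card_eq_fintype_card, ZMod.card_units_eq_totient]
  have hmain : n.totient = k.totient * Nat.card f.ker := by
    rw [← hnT, htot, hq, hkT]
  rw [h1, hUcard, hmain, Nat.mul_div_cancel_left _ (Nat.totient_pos.mpr hk0)]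
end

section
/- Let n ≥ 1 be a natural number and s a complex number with Re(s) > 1. Then ∑_{m=1}^∞ C_n^m / m^s = ζ(s) · ∑_{d | n} μ(n/d) · d^{1−s}, where C_n^m is the Ramanujan sum, μ is the Möbius function, the series converges, and ζ is the Riemann zeta function. -/
/-- The Ramanujan sum `C n m`: the sum of the `m`-th powers of the primitive
`n`-th roots of unity in `ℂ`. -/
noncomputable def ramanujanSum (n m : ℕ) : ℂ :=
  ∑ ξ ∈ primitiveRoots n ℂ, ξ ^ m

/-!
Summing `C_d^m` over `d ∣ n` gives the sum of the `m`-th powers of all `n`-th roots of unity,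
which is `n` or `0` according as `n ∣ m` or not. Möbius inversion then gives
`C_n^m = ∑_{d ∣ n, d ∣ m} μ(n/d) d`, and the multiples of `d` contribute `d^{-s} ζ(s)` to the
Dirichlet series.
-/

open Finset Complex Polynomial ArithmeticFunction LSeries

namespace IsPrimitiveRoot

variable {R : Type*} [CommRing R] [IsDomain R] {ζ : R} {n : ℕ}

theorem nthRootsFinset_one_eq_image_range [DecidableEq R] (hζ : IsPrimitiveRoot ζ n) :
    nthRootsFinset n (1 : R) = (range n).image (ζ ^ ·) := by
  rcases n.eq_zero_or_pos with rfl | hn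
  · simp
  have := NeZero.of_pos hn
  ext x
  simp only [Polynomial.mem_nthRootsFinset hn, mem_image, mem_range]
  refine ⟨hζ.eq_pow_of_pow_eq_one, ?_⟩
  rintro ⟨i, -, rfl⟩
  rw [← pow_mul, mul_comm, pow_mul, hζ.pow_eq_one, one_pow]

theorem sum_nthRootsFinset_one_pow (hζ : IsPrimitiveRoot ζ n) (m : ℕ) :
    ∑ x ∈ nthRootsFinset n (1 : R), x ^ m = if n ∣ m then (n : R) else 0 := by
  classical
  rw [hζ.nthRootsFinset_one_eq_image_range,
    sum_image fun i hi j hj => hζ.pow_inj (mem_range.1 hi) (mem_range.1 hj)]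
  simp_rw [← pow_mul, mul_comm _ m, pow_mul]
  split_ifs with hnm
  · simp [(hζ.pow_eq_one_iff_dvd m).2 hnm]
  · have hne : ζ ^ m - 1 ≠ 0 := sub_ne_zero.2 (mt (hζ.pow_eq_one_iff_dvd m).1 hnm)
    have hgeom := mul_geom_sum (ζ ^ m) n
    rw [← pow_mul, mul_comm m, pow_mul, hζ.pow_eq_one, one_pow, sub_self] at hgeom
    exact (mul_eq_zero.1 hgeom).resolve_left hne

end IsPrimitiveRoot

theorem sum_divisors_ramanujanSum (n m : ℕ) :
    ∑ d ∈ n.divisors, ramanujanSum d m = if n ∣ m then (n : ℂ) else 0 := by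
  classical
  rcases n.eq_zero_or_pos with rfl | hn
  · simp
  have hζ := Complex.isPrimitiveRoot_exp n hn.ne'
  rw [← hζ.sum_nthRootsFinset_one_pow, IsPrimitiveRoot.nthRoots_one_eq_biUnion_primitiveRoots,
    sum_biUnion fun a _ b _ hab => IsPrimitiveRoot.disjoint hab]
  rfl

theorem ramanujanSum_eq_sum_divisors_moebius (n m : ℕ) :
    ramanujanSum n m = ∑ d ∈ n.divisors, (moebius (n / d) : ℂ) * if d ∣ m then (d : ℂ) else 0 := by
  rcases n.eq_zero_or_pos with rfl | hn
  · simp [ramanujanSum]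
  rw [← (sum_eq_iff_sum_mul_moebius_eq.1 fun k _ => sum_divisors_ramanujanSum k m) n hn,
    Nat.sum_divisorsAntidiagonal' fun a b => (moebius a : ℂ) * if b ∣ m then (b : ℂ) else 0]

theorem LSeriesHasSum.ite_dvd_comp_div {f : ℕ → ℂ} {s a : ℂ} (hf : LSeriesHasSum f s a) {d : ℕ}
    (hd : d ≠ 0) :
    LSeriesHasSum (fun m => if d ∣ m then f (m / d) else 0) s ((d : ℂ) ^ (-s) * a) := by
  have hzero : ∀ m ∉ Set.range (d * ·),
      term (fun m => if d ∣ m then f (m / d) else 0) s m = 0 := by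
    intro m hm
    have hdm : ¬ d ∣ m := fun ⟨k, hk⟩ => hm ⟨k, hk.symm⟩
    simp [term_def, hdm]
  refine ((mul_right_injective₀ hd).hasSum_iff hzero).1 ?_
  have hscaled : HasSum (fun k => (d : ℂ) ^ (-s) * term f s k) ((d : ℂ) ^ (-s) * a) :=
    hf.mul_left _
  convert hscaled using 1
  ext k
  rcases eq_or_ne k 0 with rfl | hk
  · simp
  rw [Function.comp_apply, term_of_ne_zero (mul_ne_zero hd hk), term_of_ne_zero hk,
    if_pos (dvd_mul_right d k), Nat.mul_div_cancel_left k hd.bot_lt, Nat.cast_mul,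
    natCast_mul_natCast_cpow, cpow_neg]
  field_simp

theorem tsum_ramanujanSum_in_m_div_cpow_general (n : ℕ) (s : ℂ)
    (hs : 1 < s.re) :
    Summable (fun m : ℕ =>
      if m = 0 then (0 : ℂ) else ramanujanSum n m / (m : ℂ) ^ s) ∧
    ∑' m : ℕ, (if m = 0 then (0 : ℂ) else ramanujanSum n m / (m : ℂ) ^ s) =
      riemannZeta s *
        ∑ d ∈ n.divisors,
          ((ArithmeticFunction.moebius (n / d) : ℤ) : ℂ) * (d : ℂ) ^ ((1 : ℂ) - s) := by
  -- the summands are `LSeries.term (ramanujanSum n) s m` by definition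
  have hL : LSeriesHasSum (ramanujanSum n) s
      (∑ d ∈ n.divisors, (moebius (n / d) * d : ℂ) * ((d : ℂ) ^ (-s) * riemannZeta s)) := by
    convert LSeriesHasSum.sum fun d (hd : d ∈ n.divisors) =>
      ((LSeriesHasSum_one hs).ite_dvd_comp_div (Nat.pos_of_mem_divisors hd).ne').smul
        (moebius (n / d) * d : ℂ) using 1
    ext m
    simp [ramanujanSum_eq_sum_divisors_moebius, mul_ite]
  refine ⟨hL.LSeriesSummable, hL.LSeries_eq.trans ?_⟩
  rw [mul_sum]
  refine sum_congr rfl fun d hd => ?_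
  have hd0 : (d : ℂ) ≠ 0 := Nat.cast_ne_zero.2 (Nat.pos_of_mem_divisors hd).ne'
  rw [cpow_sub _ _ hd0, cpow_one, cpow_neg]
  ring

/-- For `n ≥ 1` and `Re s > 1`, the Dirichlet series of Ramanujan sums in `m`
converges and `∑_{m ≥ 1} C_n^m / m^s = ζ(s) · ∑_{d ∣ n} μ(n/d) · d^(1-s)`. -/
theorem tsum_ramanujanSum_in_m_div_cpow (n : ℕ) (hn : 1 ≤ n) (s : ℂ)
    (hs : 1 < s.re) :
    Summable (fun m : ℕ =>
      if m = 0 then (0 : ℂ) else ramanujanSum n m / (m : ℂ) ^ s) ∧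
    ∑' m : ℕ, (if m = 0 then (0 : ℂ) else ramanujanSum n m / (m : ℂ) ^ s) =
      riemannZeta s *
        ∑ d ∈ n.divisors,
          ((ArithmeticFunction.moebius (n / d) : ℤ) : ℂ) * (d : ℂ) ^ ((1 : ℂ) - s) :=
  tsum_ramanujanSum_in_m_div_cpow_general n s hs
end
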